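/- arXiv:1512.03735 — 2 statements merged into one kernel-verified Lean document; each statement's English description precedes it below -/
import Mathlib

section
/- Let H be a real Hilbert space, B : H × H → ℝ a continuous bilinear form that is coercive with constant α > 0 (i.e. B(u,u) ≥ α‖u‖² for all u ∈ H), and F : H → H a Lipschitz map with Lipschitz constant L ≥ 0. If κ := L/α < 1, then there exists a unique u ∈ H such that B(u, ψ) = ⟨F(u), ψ⟩ for all ψ ∈ H. Moreover, if u₀ = 0 and, for each n, u_{n+1} is the unique element (given by the Lax–Milgram theorem) satisfying B(u_{n+1}, ψ) = ⟨F(u_n), ψ⟩ for all ψ ∈ H, then ‖u_n − u‖ ≤ κⁿ/(1 − κ) · ‖u₁‖ for every n ∈ ℕ. -/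
/-!
Coercivity makes the Lax–Milgram solution map `f ↦ w` (with `B w ψ = ⟪f, ψ⟫` for all `ψ`)
`α⁻¹`-Lipschitz, so the linearization step `T u := w` with data `f = F u` is a contraction with
constant `κ = L / α < 1`. Solutions of the semi-linear problem are exactly the fixed points of `T`,
and the scheme started at `u₀ = 0` is the Picard iteration of `T`, so Banach's fixed point theorem gives existence, uniqueness
and the a priori estimate `‖uₙ - u‖ ≤ κⁿ / (1 - κ) · ‖u₀ - u₁‖`.
-/

open scoped RealInnerProductSpace

open Function

section Coercive

variable {H : Type*} [NormedAddCommGroup H] [InnerProductSpace ℝ H] {B : H →L[ℝ] H →L[ℝ] ℝ}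
  {α : ℝ}

theorem isCoercive_of_mul_sq_le (hα : 0 < α) (hcoer : ∀ u : H, α * ‖u‖ ^ 2 ≤ B u u) :
    IsCoercive B :=
  ⟨α, hα, fun u => by simpa only [mul_assoc, ← sq] using hcoer u⟩

theorem mul_norm_le_norm_of_coercive (hcoer : ∀ u : H, α * ‖u‖ ^ 2 ≤ B u u) {u f : H}
    (hu : ∀ ψ, B u ψ = ⟪f, ψ⟫) : α * ‖u‖ ≤ ‖f‖ := by
  rcases (norm_nonneg u).eq_or_lt with hu0 | hu0
  · rw [← hu0, mul_zero]
    exact norm_nonneg f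
  · refine le_of_mul_le_mul_right ?_ hu0
    calc α * ‖u‖ * ‖u‖ = α * ‖u‖ ^ 2 := by ring
      _ ≤ B u u := hcoer u
      _ = ⟪f, u⟫ := hu u
      _ ≤ ‖f‖ * ‖u‖ := real_inner_le_norm f u

variable [CompleteSpace H]

theorem IsCoercive.forall_apply_eq_inner_iff (hB : IsCoercive B) {w f : H} :
    (∀ ψ, B w ψ = ⟪f, ψ⟫) ↔ w = hB.continuousLinearEquivOfBilin.symm f := by
  simp only [← hB.continuousLinearEquivOfBilin_apply, ContinuousLinearEquiv.eq_symm_apply]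
  exact ⟨ext_inner_right ℝ, fun h ψ => h ▸ rfl⟩

theorem IsCoercive.lipschitzWith_symm_continuousLinearEquivOfBilin_comp (hB : IsCoercive B)
    (hα : 0 < α) (hcoer : ∀ u : H, α * ‖u‖ ^ 2 ≤ B u u) {F : H → H} {L : ℝ}
    (hF : ∀ x y : H, ‖F x - F y‖ ≤ L * ‖x - y‖) :
    LipschitzWith (L / α).toNNReal (fun x => hB.continuousLinearEquivOfBilin.symm (F x)) := by
  set e := hB.continuousLinearEquivOfBilin
  refine LipschitzWith.of_dist_le_mul fun x y => ?_
  have hsol : ∀ ψ, B (e.symm (F x - F y)) ψ = ⟪F x - F y, ψ⟫ :=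
    hB.forall_apply_eq_inner_iff.2 rfl
  rw [dist_eq_norm, dist_eq_norm, ← map_sub]
  calc ‖e.symm (F x - F y)‖ ≤ L / α * ‖x - y‖ := by
        rw [div_mul_eq_mul_div, le_div_iff₀' hα]
        exact (mul_norm_le_norm_of_coercive hcoer hsol).trans (hF x y)
    _ ≤ (L / α).toNNReal * ‖x - y‖ := by gcongr; exact Real.le_coe_toNNReal _

end Coercive

/-- Abstract Hilbert-space form of Theorem 3.6 (Theorem 9) of the paper:
existence, uniqueness and geometric convergence of the linearization scheme. -/
theorem stmt_0 {H : Type*} [NormedAddCommGroup H] [InnerProductSpace ℝ H] [CompleteSpace H]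
    (B : H →L[ℝ] H →L[ℝ] ℝ) (α : ℝ) (hα : 0 < α)
    (hcoer : ∀ u : H, α * ‖u‖ ^ 2 ≤ B u u)
    (F : H → H) (L : ℝ) (hL : 0 ≤ L)
    (hF : ∀ x y : H, ‖F x - F y‖ ≤ L * ‖x - y‖)
    (κ : ℝ) (hκdef : κ = L / α) (hκ : κ < 1) :
    (∃! u : H, ∀ ψ : H, B u ψ = ⟪F u, ψ⟫) ∧
    (∀ (v : ℕ → H) (ustar : H), v 0 = 0 →
      (∀ (n : ℕ) (ψ : H), B (v (n + 1)) ψ = ⟪F (v n), ψ⟫) →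
      (∀ ψ : H, B ustar ψ = ⟪F ustar, ψ⟫) →
      ∀ n : ℕ, ‖v n - ustar‖ ≤ κ ^ n / (1 - κ) * ‖v 1‖) := by
  have hB := isCoercive_of_mul_sq_le hα hcoer
  set T : H → H := fun x => hB.continuousLinearEquivOfBilin.symm (F x)
  have hT : ContractingWith κ.toNNReal T :=
    ⟨Real.toNNReal_lt_one.2 hκ,
      hκdef ▸ hB.lipschitzWith_symm_continuousLinearEquivOfBilin_comp hα hcoer hF⟩
  have hsolution_iff {w : H} : (∀ ψ, B w ψ = ⟪F w, ψ⟫) ↔ IsFixedPt T w :=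
    hB.forall_apply_eq_inner_iff.trans eq_comm
  have : Nonempty H := ⟨0⟩
  refine ⟨⟨_, hsolution_iff.2 hT.fixedPoint_isFixedPt,
    fun w hw => hT.fixedPoint_unique (hsolution_iff.1 hw)⟩, ?_⟩
  intro v ustar hv0 hv hustar n
  have hv_iterate : ∀ n, v n = T^[n] 0 := by
    intro n
    induction n with
    | zero => exact hv0
    | succ n ih => rw [iterate_succ_apply', ← ih]; exact hB.forall_apply_eq_inner_iff.1 (hv n)
  have hκ0 : 0 ≤ κ := hκdef ▸ div_nonneg hL hα.le
  have h := hT.apriori_dist_iterate_fixedPoint_le 0 n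
  rw [← hT.fixedPoint_unique (hsolution_iff.1 hustar), ← hv_iterate, ← iterate_one T,
    ← hv_iterate, Real.coe_toNNReal _ hκ0, dist_eq_norm, dist_eq_norm'] at h
  calc ‖v n - ustar‖ ≤ ‖v 1 - 0‖ * κ ^ n / (1 - κ) := h
    _ = κ ^ n / (1 - κ) * ‖v 1‖ := by rw [sub_zero]; ring
end

section
/- Let q > 2 and C ≥ 1/2 be real numbers, set r_n := 2·(q/2)^n for n ∈ ℕ, and let a : ℕ → ℝ be a sequence of nonnegative reals satisfying a(n+1) ≤ (C·r_n)^{1/r_n} · a(n) for all n ∈ ℕ. Then for every n ∈ ℕ, a(n) ≤ ((2C)^{q/(q−2)} · q^{2q/(q−2)²})^{1/2} · a(0). -/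
/-!
Iterating the recurrence gives `a n ≤ (∏_{k<n} (C r_k)^{1/r_k}) · a 0`. With `t = 2/q < 1`,
`log ((C r_k)^{1/r_k}) = (log (2C) + k log (q/2)) t^k / 2 ≤ (log (2C) t^k + log q · k t^k) / 2`,
and the nonnegative right-hand sides sum to `(log (2C) · q/(q-2) + log q · 2q/(q-2)²) / 2`,
which is the logarithm of the claimed constant.
-/

open Finset Real

theorem le_prod_range_mul_of_le_mul {a c : ℕ → ℝ} (hc : ∀ n, 0 ≤ c n)
    (h : ∀ n, a (n + 1) ≤ c n * a n) (n : ℕ) : a n ≤ (∏ k ∈ range n, c k) * a 0 := by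
  induction n with
  | zero => simp
  | succ n ih =>
    calc a (n + 1) ≤ c n * a n := h n
      _ ≤ c n * ((∏ k ∈ range n, c k) * a 0) := mul_le_mul_of_nonneg_left ih (hc n)
      _ = (∏ k ∈ range (n + 1), c k) * a 0 := by rw [prod_range_succ]; ring

theorem prod_range_le_exp_of_log_le_of_hasSum {c f : ℕ → ℝ} {S : ℝ} (hc : ∀ k, 0 < c k)
    (hlog : ∀ k, log (c k) ≤ f k) (hf : ∀ k, 0 ≤ f k) (hS : HasSum f S) (n : ℕ) :
    ∏ k ∈ range n, c k ≤ exp S := by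
  calc ∏ k ∈ range n, c k = exp (∑ k ∈ range n, log (c k)) := by
        rw [exp_sum]; exact prod_congr rfl fun k _ => (exp_log (hc k)).symm
    _ ≤ exp S := exp_le_exp.mpr <|
        (sum_le_sum fun k _ => hlog k).trans (sum_le_hasSum _ (fun k _ => hf k) hS)

noncomputable def moserMajorant (q C : ℝ) (k : ℕ) : ℝ :=
  log (2 * C) / 2 * (2 / q) ^ k + log q / 2 * (k * (2 / q) ^ k)

theorem moserMajorant_nonneg {q C : ℝ} (hq : 1 ≤ q) (hC : 1 / 2 ≤ C) (k : ℕ) :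
    0 ≤ moserMajorant q C k := by
  have := log_nonneg (by linarith : (1 : ℝ) ≤ 2 * C)
  have := log_nonneg hq
  unfold moserMajorant
  positivity

theorem log_moser_factor_le_moserMajorant {q C : ℝ} (hq : 2 < q) (hC : 0 < C) (k : ℕ) :
    log ((C * (2 * (q / 2) ^ k)) ^ (1 / (2 * (q / 2) ^ k))) ≤ moserMajorant q C k := by
  have hq0 : 0 < q := by linarith
  have hinv : 1 / (2 * (q / 2) ^ k) = (2 / q) ^ k / 2 := by
    rw [div_pow, div_pow]; field_simp
  rw [log_rpow (by positivity), hinv, show C * (2 * (q / 2) ^ k) = 2 * C * (q / 2) ^ k by ring,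
    log_mul (by positivity) (by positivity), log_pow]
  have hlog : log (q / 2) ≤ log q := log_le_log (by positivity) (by linarith)
  have : (k : ℝ) * log (q / 2) ≤ k * log q := by gcongr
  have : 0 ≤ (2 / q) ^ k := by positivity
  unfold moserMajorant
  nlinarith

theorem hasSum_moserMajorant {q C : ℝ} (hq : 2 < q) (hC : 0 < C) :
    HasSum (moserMajorant q C)
      (log (((2 * C) ^ (q / (q - 2)) * q ^ (2 * q / (q - 2) ^ 2)) ^ ((1 : ℝ) / 2))) := by
  have hq0 : 0 < q := by linarith
  have ht0 : 0 ≤ 2 / q := by positivity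
  have ht1 : 2 / q < 1 := by rw [div_lt_one hq0]; exact hq
  have hgeom := (hasSum_geometric_of_lt_one ht0 ht1).mul_left (log (2 * C) / 2)
  have harith := (hasSum_coe_mul_geometric_of_norm_lt_one
    (by rwa [norm_of_nonneg ht0])).mul_left (log q / 2)
  convert! hgeom.add harith using 1
  rw [log_rpow (by positivity), log_mul (by positivity) (by positivity),
    log_rpow (by positivity), log_rpow hq0]
  have : q - 2 ≠ 0 := by linarith
  field_simp

/-- The iterated Sobolev-trace recurrence of the Moser iteration in Lemma 3.3 of the paper
yields the uniform bound (3.11) with constant independent of `n`. -/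
theorem stmt_4 (q C : ℝ) (hq : 2 < q) (hC : 1 / 2 ≤ C)
    (r : ℕ → ℝ) (hr : ∀ n : ℕ, r n = 2 * (q / 2) ^ n)
    (a : ℕ → ℝ) (ha : ∀ n : ℕ, 0 ≤ a n)
    (hrec : ∀ n : ℕ, a (n + 1) ≤ (C * r n) ^ ((1 : ℝ) / r n) * a n) :
    ∀ n : ℕ, a n ≤ ((2 * C) ^ (q / (q - 2)) * q ^ (2 * q / (q - 2) ^ 2)) ^ ((1 : ℝ) / 2) * a 0 := by
  obtain rfl : r = fun n => 2 * (q / 2) ^ n := funext hr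
  have hC0 : 0 < C := by linarith
  have hq0 : 0 < q := by linarith
  have hfactor_pos : ∀ k : ℕ, 0 < (C * (2 * (q / 2) ^ k)) ^ ((1 : ℝ) / (2 * (q / 2) ^ k)) :=
    fun k => by positivity
  intro n
  calc a n ≤ (∏ k ∈ range n, (C * (2 * (q / 2) ^ k)) ^ ((1 : ℝ) / (2 * (q / 2) ^ k))) * a 0 :=
        le_prod_range_mul_of_le_mul (fun k => (hfactor_pos k).le) hrec n
    _ ≤ _ := by
        gcongr
        · exact ha 0
        refine (prod_range_le_exp_of_log_le_of_hasSum hfactor_pos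
          (log_moser_factor_le_moserMajorant hq hC0) (moserMajorant_nonneg (by linarith) hC)
          (hasSum_moserMajorant hq hC0) n).trans_eq (exp_log ?_)
        positivity
end
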